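/- arXiv:1901.10015 — 2 statements merged into one kernel-verified Lean document; each statement's English description precedes it below -/
import Mathlib

section
/- Let φ : (0,∞) → ℝ be continuous, nonnegative, locally integrable, with φ(t) ~ C t^{-α} as t → ∞ for some C > 0 and 0 < α < 1, and with φ integrable near 0. Then the Stieltjes transform K(λ) = ∫₀^∞ φ(t)/(λ+t) dt satisfies K(λ)·λ^{α} → C·π/sin(πα) as λ → ∞. -/
/-!
Write `φ = C t^{-α} + g` with `g = o(t^{-α})`. For the model density the transform is exact:
scaling `t = λ s` gives `λ^{-α} ∫₀^∞ s^{-α}/(1+s) ds`, and `s = x/(1-x)` turns the last integral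
into the Beta integral `B(1-α, α) = Γ(α) Γ(1-α) = π / sin(πα)`. For the error `g`, choose `T`
with `|g t| ≤ δ t^{-α}` on `(T, ∞)`: the piece over `(0, T]` is `O(1/λ) = o(λ^{-α})` because
`α < 1`, and the tail is at most `δ` times the model transform.
-/

open MeasureTheory Real Set Filter Topology Asymptotics

noncomputable def stieltjesTransform (φ : ℝ → ℝ) (lam : ℝ) : ℝ :=
  ∫ t in Ioi 0, φ t / (lam + t)

-- Integrability near `0` is encoded as local integrability on the closed half-line `Ici 0`.
theorem locallyIntegrableOn_Ici_of_integrableOn_Ioc {E : Type*} [NormedAddCommGroup E]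
    {f : ℝ → E} {a b : ℝ} (hab : a < b) (hf₀ : IntegrableOn f (Ioc a b))
    (hf : ContinuousOn f (Ioi a)) : LocallyIntegrableOn f (Ici a) := by
  rw [locallyIntegrableOn_iff isLocallyClosed_Ici]
  intro k hk hkc
  obtain ⟨c, hc⟩ := hkc.bddAbove
  have hIcc : IntegrableOn f (Icc a (max b c)) := by
    rw [integrableOn_Icc_iff_integrableOn_Ioc, ← Ioc_union_Ioc_eq_Ioc hab.le (le_max_left b c)]
    exact hf₀.union ((hf.mono fun x hx => hab.trans_le hx.1).integrableOn_Icc.mono_set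
      Ioc_subset_Icc_self)
  exact hIcc.mono_set fun x hx => ⟨hk hx, (hc hx).trans (le_max_right b c)⟩

theorem locallyIntegrableOn_rpow_Ici_zero {s : ℝ} (hs : -1 < s) :
    LocallyIntegrableOn (fun t : ℝ => t ^ s) (Ici 0) :=
  locallyIntegrableOn_Ici_of_integrableOn_Ioc zero_lt_one
    (intervalIntegral.intervalIntegrable_rpow' hs).1
    (continuousOn_id.rpow_const fun _ ht => Or.inl (ne_of_gt ht))

theorem integrableOn_div_add_of_isBigO {g : ℝ → ℝ} {α l : ℝ} (hα : 0 < α) (hl : 0 < l)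
    (hg : LocallyIntegrableOn g (Ici 0)) (hO : g =O[atTop] fun t => t ^ (-α)) :
    IntegrableOn (fun t => g t / (l + t)) (Ioi 0) := by
  have hloc : LocallyIntegrableOn (fun t => g t * (l + t)⁻¹) (Ici 0) :=
    hg.mul_continuousOn ((continuousOn_const.add continuousOn_id).inv₀ fun t ht =>
      (add_pos_of_pos_of_nonneg hl ht).ne') isLocallyClosed_Ici
  have hinv : (fun t : ℝ => (l + t)⁻¹) =O[atTop] fun t => t⁻¹ := by
    refine IsBigO.of_bound 1 ?_
    filter_upwards [eventually_gt_atTop 0] with t ht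
    rw [one_mul, norm_inv, norm_inv, norm_of_nonneg ht.le, norm_of_nonneg (by linarith)]
    exact inv_anti₀ ht (by linarith)
  have hdecay : (fun t => g t * (l + t)⁻¹) =O[atTop] fun t => t ^ (-α - 1) := by
    refine (hO.mul hinv).congr' EventuallyEq.rfl ?_
    filter_upwards [eventually_gt_atTop 0] with t ht
    rw [rpow_sub_one ht.ne', div_eq_mul_inv]
  have hint : IntegrableAtFilter (fun t : ℝ => t ^ (-α - 1)) atTop :=
    ⟨Ioi 1, Ioi_mem_atTop 1, integrableOn_Ioi_rpow_of_lt (by linarith) one_pos⟩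
  exact (hloc.integrableOn_of_isBigO_atTop hdecay hint).mono_set Ioi_subset_Ici_self

theorem integrableOn_rpow_neg_div_add {α l : ℝ} (hα0 : 0 < α) (hα1 : α < 1) (hl : 0 < l) :
    IntegrableOn (fun t => t ^ (-α) / (l + t)) (Ioi 0) :=
  integrableOn_div_add_of_isBigO hα0 hl (locallyIntegrableOn_rpow_Ici_zero (by linarith))
    (isBigO_refl _ _)

theorem integral_rpow_neg_mul_one_sub_rpow {α : ℝ} (hα0 : 0 < α) (hα1 : α < 1) :
    ∫ x in (0:ℝ)..1, x ^ (-α) * (1 - x) ^ (α - 1) = π / sin (π * α) := by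
  have hbeta : Complex.betaIntegral (1 - α) α = ((π / sin (π * α) : ℝ) : ℂ) := by
    have h := Complex.Gamma_mul_Gamma_eq_betaIntegral (s := 1 - α) (t := α)
      (by simpa using hα1) (by simpa using hα0)
    rw [sub_add_cancel, Complex.Gamma_one, one_mul] at h
    rw [← h, mul_comm, show (1 : ℂ) - α = ((1 - α : ℝ) : ℂ) by push_cast; ring,
      Complex.Gamma_ofReal, Complex.Gamma_ofReal, ← Complex.ofReal_mul,
      Real.Gamma_mul_Gamma_one_sub α]
  have hreal : Complex.betaIntegral (1 - α) α
      = ((∫ x in (0:ℝ)..1, x ^ (-α) * (1 - x) ^ (α - 1) : ℝ) : ℂ) := by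
    rw [Complex.betaIntegral, ← intervalIntegral.integral_ofReal]
    refine intervalIntegral.integral_congr fun x hx => ?_
    rw [uIcc_of_le zero_le_one] at hx
    rw [Complex.ofReal_mul, Complex.ofReal_cpow hx.1, Complex.ofReal_cpow (sub_nonneg.2 hx.2)]
    push_cast
    ring_nf
  exact_mod_cast hreal.symm.trans hbeta

theorem integral_rpow_neg_div_one_add {α : ℝ} (hα0 : 0 < α) (hα1 : α < 1) :
    ∫ t in Ioi (0:ℝ), t ^ (-α) / (1 + t) = π / sin (π * α) := by
  have himage : (fun x : ℝ => x / (1 - x)) '' Ioo 0 1 = Ioi 0 := by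
    ext t
    simp only [mem_image, mem_Ioo, mem_Ioi]
    constructor
    · rintro ⟨x, ⟨hx0, hx1⟩, rfl⟩
      exact div_pos hx0 (by linarith)
    · intro ht
      refine ⟨t / (1 + t), ⟨by positivity, (div_lt_one (by positivity)).2 (by linarith)⟩, ?_⟩
      field_simp
      ring
  have hderiv : ∀ x ∈ Ioo (0:ℝ) 1,
      HasDerivWithinAt (fun x : ℝ => x / (1 - x)) ((1 - x) ^ 2)⁻¹ (Ioo 0 1) x := by
    intro x hx
    have h1 : (1:ℝ) - x ≠ 0 := by linarith [hx.2]
    have h : HasDerivAt (fun y : ℝ => y / (1 - y)) ((1 * (1 - x) - x * (0 - 1)) / (1 - x) ^ 2) x :=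
      (hasDerivAt_id' x).div ((hasDerivAt_const x 1).sub (hasDerivAt_id' x)) h1
    exact h.hasDerivWithinAt.congr_deriv (by field_simp; ring)
  have hinj : InjOn (fun x : ℝ => x / (1 - x)) (Ioo 0 1) := by
    intro a ha b hb hab
    have ha1 : (1:ℝ) - a ≠ 0 := by linarith [ha.2]
    have hb1 : (1:ℝ) - b ≠ 0 := by linarith [hb.2]
    field_simp at hab
    linarith
  rw [← himage, integral_image_eq_integral_abs_deriv_smul measurableSet_Ioo hderiv hinj,
    ← integral_rpow_neg_mul_one_sub_rpow hα0 hα1,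
    intervalIntegral.integral_of_le zero_le_one, integral_Ioc_eq_integral_Ioo]
  refine setIntegral_congr_fun measurableSet_Ioo fun x ⟨hx0, hx1⟩ => ?_
  have hx1' : 0 < 1 - x := by linarith
  have h1 : 1 + x / (1 - x) = (1 - x)⁻¹ := by field_simp; ring
  rw [h1, smul_eq_mul, abs_of_pos (by positivity), div_rpow hx0.le hx1'.le,
    rpow_sub hx1', rpow_one, rpow_neg hx1'.le α]
  field_simp

theorem stieltjesTransform_rpow_neg {α l : ℝ} (hα0 : 0 < α) (hα1 : α < 1) (hl : 0 < l) :
    stieltjesTransform (fun t => t ^ (-α)) l = l ^ (-α) * (π / sin (π * α)) := by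
  have hscale := integral_comp_mul_left_Ioi (fun t => t ^ (-α) / (l + t)) 0 hl
  rw [mul_zero] at hscale
  have hcongr : ∫ x in Ioi (0:ℝ), (l * x) ^ (-α) / (l + l * x)
      = ∫ x in Ioi (0:ℝ), l ^ (-α) / l * (x ^ (-α) / (1 + x)) := by
    refine setIntegral_congr_fun measurableSet_Ioi fun x hx => ?_
    rw [mul_rpow hl.le (le_of_lt hx), show l + l * x = l * (1 + x) by ring]
    field_simp
  rw [hcongr, integral_const_mul, integral_rpow_neg_div_one_add hα0 hα1, smul_eq_mul,
    eq_inv_mul_iff_mul_eq₀ hl.ne'] at hscale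
  rw [stieltjesTransform, ← hscale]
  field_simp

theorem norm_setIntegral_div_add_le {g : ℝ → ℝ} {s : Set ℝ} {l : ℝ} (hl : 0 < l)
    (hs : MeasurableSet s) (hs₀ : s ⊆ Ici 0) (hg : IntegrableOn g s) :
    ‖∫ t in s, g t / (l + t)‖ ≤ (∫ t in s, ‖g t‖) * l⁻¹ := by
  rw [← integral_mul_const]
  refine norm_integral_le_of_norm_le (hg.norm.mul_const _) ?_
  filter_upwards [ae_restrict_mem hs] with t ht
  have ht₀ : (0:ℝ) ≤ t := hs₀ ht
  rw [norm_div, norm_of_nonneg (by linarith : 0 ≤ l + t), div_eq_mul_inv]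
  gcongr
  linarith

theorem norm_setIntegral_Ioi_div_add_le {g : ℝ → ℝ} {α δ T l : ℝ} (hα0 : 0 < α) (hα1 : α < 1)
    (hδ : 0 ≤ δ) (hT : 0 ≤ T) (hl : 0 < l) (hg : ∀ t > T, ‖g t‖ ≤ δ * t ^ (-α)) :
    ‖∫ t in Ioi T, g t / (l + t)‖ ≤ δ * (l ^ (-α) * (π / sin (π * α))) := by
  have hint : IntegrableOn (fun t => δ * (t ^ (-α) / (l + t))) (Ioi 0) :=
    (integrableOn_rpow_neg_div_add hα0 hα1 hl).const_mul δ
  calc ‖∫ t in Ioi T, g t / (l + t)‖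
      ≤ ∫ t in Ioi T, δ * (t ^ (-α) / (l + t)) := by
        refine norm_integral_le_of_norm_le (hint.mono_set (Ioi_subset_Ioi hT)) ?_
        filter_upwards [ae_restrict_mem measurableSet_Ioi] with t ht
        have hlt : 0 < l + t := by linarith [mem_Ioi.1 ht]
        rw [norm_div, norm_of_nonneg hlt.le, ← mul_div_assoc]
        gcongr
        exact hg t ht
    _ ≤ ∫ t in Ioi 0, δ * (t ^ (-α) / (l + t)) := by
        refine setIntegral_mono_set hint ?_ (Ioi_subset_Ioi hT).eventuallyLE
        filter_upwards [ae_restrict_mem measurableSet_Ioi] with t ht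
        have ht₀ : (0:ℝ) < t := ht
        positivity
    _ = δ * (l ^ (-α) * (π / sin (π * α))) := by
        rw [integral_const_mul, ← stieltjesTransform_rpow_neg hα0 hα1 hl, stieltjesTransform]

theorem isLittleO_inv_rpow_neg_atTop {α : ℝ} (hα : α < 1) :
    (fun l : ℝ => l⁻¹) =o[atTop] fun l => l ^ (-α) := by
  have h := ((isLittleO_one_iff ℝ).2 (tendsto_rpow_neg_atTop (sub_pos.2 hα))).mul_isBigO
    (isBigO_refl (fun l : ℝ => l ^ (-α)) atTop)
  refine h.congr' ?_ (by simp only [one_mul]; rfl)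
  filter_upwards [eventually_gt_atTop 0] with l hl
  rw [← rpow_add hl, show -(1 - α) + -α = -1 by ring, rpow_neg_one]

theorem isLittleO_stieltjesTransform {g : ℝ → ℝ} {α : ℝ} (hα0 : 0 < α) (hα1 : α < 1)
    (hg : LocallyIntegrableOn g (Ici 0)) (ho : g =o[atTop] fun t => t ^ (-α)) :
    stieltjesTransform g =o[atTop] fun l => l ^ (-α) := by
  set S := π / sin (π * α)
  have hS : 0 < S :=
    div_pos pi_pos (sin_pos_of_pos_of_lt_pi (by positivity) (by nlinarith [pi_pos]))
  refine IsLittleO.of_bound fun ε hε => ?_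
  set δ := ε / (2 * S)
  obtain ⟨T, hT, hgT⟩ : ∃ T, 0 ≤ T ∧ ∀ t > T, ‖g t‖ ≤ δ * t ^ (-α) := by
    obtain ⟨a, ha⟩ := eventually_atTop.1 (ho.bound (by positivity : 0 < δ))
    refine ⟨max a 0, le_max_right a 0, fun t ht => ?_⟩
    have ht' := (max_lt_iff.1 ht)
    simpa only [norm_of_nonneg (rpow_nonneg ht'.2.le _)] using ha t ht'.1.le
  set M := ∫ t in Ioc 0 T, ‖g t‖
  have hM := ((isLittleO_inv_rpow_neg_atTop hα1).const_mul_left M).bound (half_pos hε)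
  filter_upwards [hM, eventually_gt_atTop 0] with l hMl hl
  have hl' : 0 ≤ l ^ (-α) := rpow_nonneg hl.le _
  have hgl := integrableOn_div_add_of_isBigO hα0 hl hg ho.isBigO
  have hsplit : stieltjesTransform g l
      = (∫ t in Ioc 0 T, g t / (l + t)) + ∫ t in Ioi T, g t / (l + t) := by
    rw [stieltjesTransform, ← setIntegral_union (Ioc_disjoint_Ioi le_rfl) measurableSet_Ioi
      (hgl.mono_set Ioc_subset_Ioi_self) (hgl.mono_set (Ioi_subset_Ioi hT)),
      Ioc_union_Ioi_eq_Ioi hT]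
  rw [norm_of_nonneg hl', norm_mul, norm_of_nonneg (integral_nonneg fun _ => norm_nonneg _),
    norm_inv, norm_of_nonneg hl.le] at hMl
  rw [norm_of_nonneg hl']
  have hgT₀ : IntegrableOn g (Ioc 0 T) :=
    (hg.integrableOn_compact_subset Icc_subset_Ici_self isCompact_Icc).mono_set Ioc_subset_Icc_self
  calc ‖stieltjesTransform g l‖
      ≤ ‖∫ t in Ioc 0 T, g t / (l + t)‖ + ‖∫ t in Ioi T, g t / (l + t)‖ :=
        hsplit ▸ norm_add_le _ _
    _ ≤ M * l⁻¹ + δ * (l ^ (-α) * S) :=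
        add_le_add (norm_setIntegral_div_add_le hl measurableSet_Ioc
          (Ioc_subset_Ioi_self.trans Ioi_subset_Ici_self) hgT₀)
          (norm_setIntegral_Ioi_div_add_le hα0 hα1 (by positivity) hT hl hgT)
    _ ≤ ε / 2 * l ^ (-α) + ε / 2 * l ^ (-α) := by
        have hδS : δ * (l ^ (-α) * S) = ε / 2 * l ^ (-α) := by simp only [δ]; field_simp
        linarith
    _ = ε * l ^ (-α) := by ring

theorem tendsto_stieltjesTransform_mul_rpow {φ : ℝ → ℝ} {C α : ℝ} (hα0 : 0 < α) (hα1 : α < 1)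
    (hφ : LocallyIntegrableOn φ (Ici 0)) (hasym : φ ~[atTop] fun t => C * t ^ (-α)) :
    Tendsto (fun l => stieltjesTransform φ l * l ^ α) atTop (𝓝 (C * (π / sin (π * α)))) := by
  set g := fun t => φ t - C * t ^ (-α)
  have hg : LocallyIntegrableOn g (Ici 0) :=
    hφ.sub ((locallyIntegrableOn_rpow_Ici_zero (by linarith)).smul C)
  have ho : g =o[atTop] fun t => t ^ (-α) :=
    hasym.isLittleO.trans_isBigO (isBigO_const_mul_self C _ _)
  have hsplit : ∀ l > 0, stieltjesTransform g l / l ^ (-α) + C * (π / sin (π * α))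
      = stieltjesTransform φ l * l ^ α := by
    intro l hl
    have hφg : stieltjesTransform φ l
        = stieltjesTransform g l + C * stieltjesTransform (fun t => t ^ (-α)) l := by
      rw [stieltjesTransform, stieltjesTransform, stieltjesTransform, ← integral_const_mul,
        ← integral_add (integrableOn_div_add_of_isBigO hα0 hl hg ho.isBigO)
          ((integrableOn_rpow_neg_div_add hα0 hα1 hl).const_mul C)]
      congr 1 with t
      ring
    rw [hφg, stieltjesTransform_rpow_neg hα0 hα1 hl, rpow_neg hl.le]
    have : l ^ α ≠ 0 := (rpow_pos_of_pos hl α).ne'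
    field_simp
  have hlim := (isLittleO_stieltjesTransform hα0 hα1 hg ho).tendsto_div_nhds_zero.add_const
    (C * (π / sin (π * α)))
  rw [zero_add] at hlim
  exact hlim.congr' (eventually_gt_atTop 0 |>.mono hsplit)

theorem stieltjes_transform_asymptotics_at_infinity_general
    (φ : ℝ → ℝ) (C α : ℝ) (hα0 : 0 < α) (hα1 : α < 1)
    (hcont : ContinuousOn φ (Ioi 0))
    (hint0 : IntegrableOn φ (Ioc (0:ℝ) 1))
    (hasym : Tendsto (fun t => φ t / (C * t ^ (-α))) atTop (𝓝 1)) :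
    Tendsto (fun lam => (∫ t in Ioi (0:ℝ), φ t / (lam + t)) * lam ^ α)
      atTop (𝓝 (C * π / Real.sin (π * α))) := by
  rw [mul_div_assoc]
  exact tendsto_stieltjesTransform_mul_rpow hα0 hα1
    (locallyIntegrableOn_Ici_of_integrableOn_Ioc zero_lt_one hint0 hcont)
    (isEquivalent_of_tendsto_one hasym)

theorem stieltjes_transform_asymptotics_at_infinity
    (φ : ℝ → ℝ) (C α : ℝ) (hC : 0 < C) (hα0 : 0 < α) (hα1 : α < 1)
    (hcont : ContinuousOn φ (Ioi 0))
    (hpos : ∀ t : ℝ, 0 < t → 0 ≤ φ t)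
    (hint0 : IntegrableOn φ (Ioc (0:ℝ) 1))
    (hasym : Tendsto (fun t => φ t / (C * t ^ (-α))) atTop (𝓝 1)) :
    Tendsto (fun lam => (∫ t in Ioi (0:ℝ), φ t / (lam + t)) * lam ^ α)
      atTop (𝓝 (C * π / Real.sin (π * α))) :=
  stieltjes_transform_asymptotics_at_infinity_general φ C α hα0 hα1 hcont hint0 hasym
end

section
/- The exponential integral E₁(x) = ∫_x^∞ t^{-1} e^{-t} dt satisfies E₁(x) + log x → -κ as x → 0⁺, where κ is the Euler–Mascheroni constant. -/
open MeasureTheory Real Set Filter Topology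

/-- The exponential integral `E₁(x) = ∫ x^∞ e^(-t)/t dt`. -/
noncomputable def expIntegralE1 (x : ℝ) : ℝ :=
  ∫ t in Ioi x, Real.exp (-t) / t

/-!
Integrating by parts, `E₁(x) + log x = ∫ₓ^∞ log t · e^{-t} dt + (1 - e^{-x}) log x`.
As `x → 0⁺` the second term vanishes and the first tends to `∫₀^∞ log t · e^{-t} dt = Γ'(1) = -γ`.
-/

theorem tendsto_setIntegral_Ioi_nhdsGT {E : Type*} [NormedAddCommGroup E] [NormedSpace ℝ E]
    {f : ℝ → E} {a : ℝ} (hf : IntegrableOn f (Ioi a)) :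
    Tendsto (fun x => ∫ t in Ioi x, f t) (𝓝[>] a) (𝓝 (∫ t in Ioi a, f t)) := by
  have h_indicator : Tendsto (fun x => ∫ t in Ioi a, (Ioi x).indicator f t) (𝓝[>] a)
      (𝓝 (∫ t in Ioi a, f t)) := by
    refine tendsto_integral_filter_of_dominated_convergence (fun t => ‖f t‖)
      (.of_forall fun x => hf.aestronglyMeasurable.indicator measurableSet_Ioi)
      (.of_forall fun x => .of_forall fun t => norm_indicator_le_norm_self f t) hf.norm ?_
    filter_upwards [ae_restrict_mem measurableSet_Ioi] with t (ht : a < t)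
    refine tendsto_const_nhds.congr' ?_
    filter_upwards [Ioo_mem_nhdsGT ht] with x hx
    exact (indicator_of_mem (hx.2 : x < t) f).symm
  refine h_indicator.congr' ?_
  filter_upwards [self_mem_nhdsWithin] with x (hx : a < x)
  rw [integral_indicator measurableSet_Ioi, Measure.restrict_restrict measurableSet_Ioi,
    inter_eq_left.mpr (Ioi_subset_Ioi hx.le)]

theorem integral_Ioi_zero_log_mul_exp_neg :
    ∫ t in Ioi (0 : ℝ), log t * exp (-t) = -eulerMascheroniConstant := by
  have h_gamma : Complex.Gamma =ᶠ[𝓝 1] Complex.GammaIntegral := by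
    filter_upwards [(isOpen_lt continuous_const Complex.continuous_re).mem_nhds
      (by simp : (0 : ℝ) < (1 : ℂ).re)] with s hs
    exact Complex.Gamma_eq_integral hs
  have h_deriv := ((Complex.hasDerivAt_GammaIntegral (s := 1) (by simp)).congr_of_eventuallyEq
    h_gamma).unique Complex.hasDerivAt_Gamma_one
  simp only [sub_self, Complex.cpow_zero, one_mul, ← Complex.ofReal_mul] at h_deriv
  exact_mod_cast h_deriv

-- A non-integrable function has integral `0`, which is not `-γ`.
theorem integrableOn_Ioi_log_mul_exp_neg :
    IntegrableOn (fun t => log t * exp (-t)) (Ioi (0 : ℝ)) := by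
  by_contra h
  have h_value := integral_Ioi_zero_log_mul_exp_neg
  rw [integral_undef h] at h_value
  linarith [one_half_lt_eulerMascheroniConstant]

theorem integrableOn_Ioi_exp_neg_div {x : ℝ} (hx : 0 < x) :
    IntegrableOn (fun t => exp (-t) / t) (Ioi x) := by
  refine ((integrableOn_exp_neg_Ioi x).div_const x).mono' ?_ ?_
  · exact (continuousOn_exp.comp continuousOn_neg (mapsTo_univ _ _) |>.div continuousOn_id
      fun t ht => (hx.trans ht).ne').aestronglyMeasurable measurableSet_Ioi
  · filter_upwards [ae_restrict_mem measurableSet_Ioi] with t (ht : x < t)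
    rw [norm_of_nonneg (div_nonneg (exp_pos _).le (hx.trans ht).le)]
    exact div_le_div_of_nonneg_left (exp_pos _).le hx ht.le

theorem tendsto_exp_neg_mul_log_atTop :
    Tendsto (fun t => exp (-t) * log t) atTop (𝓝 0) := by
  refine squeeze_zero_norm' ?_ (tendsto_pow_mul_exp_neg_atTop_nhds_zero 1)
  filter_upwards [eventually_ge_atTop 1] with t ht
  rw [norm_mul, norm_of_nonneg (exp_pos _).le, norm_of_nonneg (log_nonneg ht), pow_one,
    mul_comm t]
  gcongr
  linarith [log_le_sub_one_of_pos (by linarith : 0 < t)]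

theorem integral_Ioi_log_mul_exp_neg_eq_add_expIntegralE1 {x : ℝ} (hx : 0 < x) :
    ∫ t in Ioi x, log t * exp (-t) = exp (-x) * log x + expIntegralE1 x := by
  have h_log_exp := integrableOn_Ioi_log_mul_exp_neg.mono_set (Ioi_subset_Ioi hx.le)
  have h_exp_div := integrableOn_Ioi_exp_neg_div hx
  have h_deriv : ∀ t ∈ Ici x, HasDerivAt (fun t => -(exp (-t) * log t))
      (log t * exp (-t) - exp (-t) / t) t := by
    intro t ht
    have h_exp : HasDerivAt (fun t => exp (-t)) (-exp (-t)) t := by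
      simpa using (hasDerivAt_neg t).exp
    exact (h_exp.mul (hasDerivAt_log (hx.trans_le ht).ne')).neg.congr_deriv (by ring)
  have h_parts := integral_Ioi_of_hasDerivAt_of_tendsto' h_deriv (h_log_exp.sub h_exp_div)
    (by simpa using tendsto_exp_neg_mul_log_atTop.neg)
  rw [integral_sub h_log_exp h_exp_div] at h_parts
  rw [expIntegralE1]
  linarith

theorem expIntegralE1_add_log_eq {x : ℝ} (hx : 0 < x) :
    expIntegralE1 x + log x = (∫ t in Ioi x, log t * exp (-t)) + (1 - exp (-x)) * log x := by
  rw [integral_Ioi_log_mul_exp_neg_eq_add_expIntegralE1 hx]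
  ring

theorem tendsto_one_sub_exp_neg_mul_log_nhdsGT_zero :
    Tendsto (fun x => (1 - exp (-x)) * log x) (𝓝[>] 0) (𝓝 0) := by
  have h_mul_log : Tendsto (fun x => x * log x) (𝓝[>] 0) (𝓝 0) :=
    (continuous_mul_log.tendsto' 0 0 (by simp)).mono_left nhdsWithin_le_nhds
  refine squeeze_zero_norm' ?_ (by simpa using h_mul_log.norm)
  filter_upwards [self_mem_nhdsWithin] with x (hx : 0 < x)
  rw [norm_mul, norm_eq_abs, norm_eq_abs, abs_of_pos hx,
    abs_of_nonneg (by linarith [exp_le_one_iff.mpr (neg_nonpos.mpr hx.le)])]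
  gcongr
  linarith [add_one_le_exp (-x)]

theorem expIntegralE1_add_log_tendsto :
    Tendsto (fun x => expIntegralE1 x + Real.log x) (𝓝[>] (0:ℝ))
      (𝓝 (-Real.eulerMascheroniConstant)) := by
  have h_lim := (tendsto_setIntegral_Ioi_nhdsGT integrableOn_Ioi_log_mul_exp_neg).add
    tendsto_one_sub_exp_neg_mul_log_nhdsGT_zero
  rw [integral_Ioi_zero_log_mul_exp_neg, add_zero] at h_lim
  refine h_lim.congr' ?_
  filter_upwards [self_mem_nhdsWithin] with x (hx : 0 < x)
  exact (expIntegralE1_add_log_eq hx).symm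
end
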